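/- Every proper subclass of Av(231) is splittable over the class L of layered permutations; that is, for every proper subclass C ⊊ Av(231) there exist finitely many subclasses of L whose merge contains C. -/

import Mathlib

/-- A permutation of some finite length `n`, as a bijection of `Fin n`. -/
abbrev PPerm : Type := Σ n : ℕ, Equiv.Perm (Fin n)

/-- `Contains π σ` : the pattern `σ` occurs in (is contained in) `π`. -/
def Contains (π σ : PPerm) : Prop :=
  ∃ f : Fin σ.1 → Fin π.1, StrictMono f ∧
    ∀ i j, σ.2 i < σ.2 j ↔ π.2 (f i) < π.2 (f j)

/-- A permutation class: a set of permutations closed downwards under containment. -/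
def IsPermClass (C : Set PPerm) : Prop :=
  ∀ π ∈ C, ∀ σ : PPerm, Contains π σ → σ ∈ C

/-- `σ` is (exactly) the pattern of the set `S` of points of `π`. -/
def PatternOf (π : PPerm) (S : Set (Fin π.1)) (σ : PPerm) : Prop :=
  ∃ f : Fin σ.1 → Fin π.1, StrictMono f ∧ Set.range f = S ∧
    ∀ i j, σ.2 i < σ.2 j ↔ π.2 (f i) < π.2 (f j)

/-- The points of `π` lying in `S` contain an occurrence of `σ`. -/
def ContainsIn (π : PPerm) (S : Set (Fin π.1)) (σ : PPerm) : Prop :=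
  ∃ f : Fin σ.1 → Fin π.1, StrictMono f ∧ (∀ i, f i ∈ S) ∧
    ∀ i j, σ.2 i < σ.2 j ↔ π.2 (f i) < π.2 (f j)

/-- `π` is a merge of `σ` and `τ`: its points split into a part with pattern `σ`
and a part with pattern `τ`. -/
def IsMerge (π σ τ : PPerm) : Prop :=
  ∃ S : Set (Fin π.1), PatternOf π S σ ∧ PatternOf π Sᶜ τ

/-- Merge of two classes. -/
def MergeCl (C D : Set PPerm) : Set PPerm :=
  {π | ∃ σ ∈ C, ∃ τ ∈ D, IsMerge π σ τ}

/-- The empty permutation. -/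
def pempty : PPerm := ⟨0, 1⟩

/-- The singleton permutation `1`. -/
def pone : PPerm := ⟨1, 1⟩

/-- Iterated merge of a list of classes. -/
def MergeAll : List (Set PPerm) → Set PPerm
  | [] => {pempty}
  | [C] => C
  | C :: D :: Cs => MergeCl C (MergeAll (D :: Cs))

/-- A class is splittable if it is contained in the merge of finitely many
of its proper subclasses. -/
def Splittable (C : Set PPerm) : Prop :=
  ∃ Cs : List (Set PPerm), Cs ≠ [] ∧
    (∀ D ∈ Cs, IsPermClass D ∧ D ⊆ C ∧ D ≠ C) ∧ C ⊆ MergeAll Cs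

/-- A class is atomic if it is not the union of two proper subclasses. -/
def Atomic (C : Set PPerm) : Prop :=
  ¬ ∃ D E : Set PPerm, IsPermClass D ∧ IsPermClass E ∧
      D ⊆ C ∧ D ≠ C ∧ E ⊆ C ∧ E ≠ C ∧ C = D ∪ E

/-- Inflation `A[B]` of a class `A` by a class `B`: `π` decomposes into
consecutive nonempty blocks (given by the fibres of the monotone surjection `g`),
the relative order of distinct blocks follows `σ ∈ A`, and each block has its
pattern in `B`. -/
def Inflate (A B : Set PPerm) : Set PPerm :=
  {π | ∃ σ ∈ A, ∃ g : Fin π.1 → Fin σ.1, Monotone g ∧ Function.Surjective g ∧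
    (∀ p q, g p ≠ g q → (π.2 p < π.2 q ↔ σ.2 (g p) < σ.2 (g q))) ∧
    ∀ b : Fin σ.1, ∃ τ ∈ B, PatternOf π {p | g p = b} τ}

/-- Direct sum `σ ⊕ τ`. -/
def psum (σ τ : PPerm) : PPerm :=
  ⟨σ.1 + τ.1, finSumFinEquiv.permCongr (σ.2.sumCongr τ.2)⟩

/-- Skew sum `σ ⊖ τ`. -/
def pskew (σ τ : PPerm) : PPerm :=
  ⟨σ.1 + τ.1,
    finSumFinEquiv.symm.trans ((σ.2.sumCongr τ.2).trans
      ((Equiv.sumComm (Fin σ.1) (Fin τ.1)).trans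
        (finSumFinEquiv.trans (finCongr (Nat.add_comm τ.1 σ.1)))))⟩

/-- Sum-decomposable: a direct sum of two nonempty permutations. -/
def SumDecomp (π : PPerm) : Prop :=
  ∃ σ τ : PPerm, 0 < σ.1 ∧ 0 < τ.1 ∧ π = psum σ τ

/-- Skew-decomposable: a skew sum of two nonempty permutations. -/
def SkewDecomp (π : PPerm) : Prop :=
  ∃ σ τ : PPerm, 0 < σ.1 ∧ 0 < τ.1 ∧ π = pskew σ τ

def SumClosed (C : Set PPerm) : Prop := ∀ σ ∈ C, ∀ τ ∈ C, psum σ τ ∈ C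

def SkewClosed (C : Set PPerm) : Prop := ∀ σ ∈ C, ∀ τ ∈ C, pskew σ τ ∈ C

/-- The class of permutations avoiding the pattern `σ`. -/
def Av (σ : PPerm) : Set PPerm := {π | ¬ Contains π σ}

/-- The basis of a class: minimal permutations not belonging to it. -/
def PBasis (C : Set PPerm) : Set PPerm :=
  {π | π ∉ C ∧ ∀ σ : PPerm, Contains π σ → σ ≠ π → σ ∈ C}

/-- An interval of `π`: a set of points contiguous in positions and in values. -/
def IsInterval (π : PPerm) (S : Set (Fin π.1)) : Prop :=
  (∀ a ∈ S, ∀ b ∈ S, ∀ c, a ≤ c → c ≤ b → c ∈ S) ∧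
  (∀ a ∈ S, ∀ b ∈ S, ∀ c, π.2 a ≤ π.2 c → π.2 c ≤ π.2 b → c ∈ S)

/-- A simple permutation: its only intervals are the subsingletons and the whole. -/
def SimplePerm (π : PPerm) : Prop :=
  ∀ S : Set (Fin π.1), IsInterval π S → S.Subsingleton ∨ S = Set.univ

/-- Build a permutation from a function with an explicit inverse. -/
def mkP {n : ℕ} (f g : Fin n → Fin n)
    (h₁ : ∀ i, g (f i) = i) (h₂ : ∀ i, f (g i) = i) : PPerm :=
  ⟨n, ⟨f, g, h₁, h₂⟩⟩

def p12 : PPerm := ⟨2, 1⟩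
def p21 : PPerm := mkP ![1,0] ![1,0] (by decide) (by decide)
def p213 : PPerm := mkP ![1,0,2] ![1,0,2] (by decide) (by decide)
def p231 : PPerm := mkP ![1,2,0] ![2,0,1] (by decide) (by decide)
def p312 : PPerm := mkP ![2,0,1] ![1,2,0] (by decide) (by decide)
def p1234 : PPerm := ⟨4, 1⟩
def p2143 : PPerm := mkP ![1,0,3,2] ![1,0,3,2] (by decide) (by decide)
def p3412 : PPerm := mkP ![2,3,0,1] ![2,3,0,1] (by decide) (by decide)
def p4321 : PPerm := mkP ![3,2,1,0] ![3,2,1,0] (by decide) (by decide)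
def p2413 : PPerm := mkP ![1,3,0,2] ![2,0,3,1] (by decide) (by decide)
def p3142 : PPerm := mkP ![2,0,3,1] ![1,3,0,2] (by decide) (by decide)

/-- The class `I` of increasing permutations. -/
def IncCl : Set PPerm := Av p21
/-- The class `D` of decreasing permutations. -/
def DecCl : Set PPerm := Av p12
/-- The class `Av(213)`. -/
def Av213 : Set PPerm := Av p213
/-- The class `L = Av(231, 312)` of layered permutations. -/
def Layered : Set PPerm := Av p231 ∩ Av p312
/-- Separable permutations, characterised by avoidance of `2413` and `3142`. -/
def SepA : Set PPerm := Av p2413 ∩ Av p3142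
/-- Separable permutations avoiding every element of `F`. -/
def Avs (F : Set PPerm) : Set PPerm := {π ∈ SepA | ∀ τ ∈ F, ¬ Contains π τ}
/-- The class of separable permutations, defined as the smallest permutation class
containing `1` and closed under direct sums and skew sums. -/
def SepCl : Set PPerm :=
  ⋂₀ {C : Set PPerm | IsPermClass C ∧ pone ∈ C ∧
      ∀ σ ∈ C, ∀ τ ∈ C, psum σ τ ∈ C ∧ pskew σ τ ∈ C}

/-!
A proper subclass `C` of `Av(231)` misses some 231-avoiding permutation `β`. Call a set of points a
tree of depth `m + 1` if it has a point `v` with a tree of depth `m` to the south-west and one to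
the south-east of `v`. In a 231-avoiding permutation, a tree of depth `|β|` contains a copy of `β`:
the maximum of `β` goes to the root and the parts of `β` left and right of it go into the two
subtrees. So no `π ∈ C` contains a tree of depth `|β|`.

A 231-avoiding set `S` without a tree of depth `m + 1` is a decreasing sequence together with
`2m + 1` layered sets. Let `v₀` be the highest point having a tree of depth `m` to its south-east.
The points west of `v₀` lie below it, so they form no tree of depth `m`; the south-east of `v₀` is
handled by induction; the north-east of `v₀` is its increasing sequence of left-to-right maxima
together with the points south-east of each of these, none of which holds a tree of depth `m`.
These regions are stacked from south-west to north-east, so their layered colourings combine, and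
`v₀` extends the decreasing sequence. Hence every `π ∈ C` is a merge of `2|β|` layered permutations.
-/

theorem Contains.trans {π σ τ : PPerm} (h₁ : Contains π σ) (h₂ : Contains σ τ) :
    Contains π τ := by
  obtain ⟨f, hf, hfv⟩ := h₁
  obtain ⟨g, hg, hgv⟩ := h₂
  exact ⟨f ∘ g, hf.comp hg, fun i j => (hgv i j).trans (hfv (g i) (g j))⟩

theorem isPermClass_av (τ : PPerm) : IsPermClass (Av τ) :=
  fun _ hπ _ hσ hτ => hπ (hσ.trans hτ)

theorem isPermClass_layered : IsPermClass Layered :=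
  fun π hπ σ hσ => ⟨isPermClass_av _ π hπ.1 σ hσ, isPermClass_av _ π hπ.2 σ hσ⟩

section

variable {π β : PPerm}

theorem Contains.exists_231 (h : Contains π p231) :
    ∃ a b c : Fin π.1, a < b ∧ b < c ∧ π.2 c < π.2 a ∧ π.2 a < π.2 b := by
  obtain ⟨f, hf, hv⟩ := h
  exact ⟨f ⟨0, by decide⟩, f ⟨1, by decide⟩, f ⟨2, by decide⟩, hf (by decide), hf (by decide),
    (hv _ _).1 (by decide), (hv _ _).1 (by decide)⟩

theorem Contains.exists_312 (h : Contains π p312) :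
    ∃ a b c : Fin π.1, a < b ∧ b < c ∧ π.2 b < π.2 c ∧ π.2 c < π.2 a := by
  obtain ⟨f, hf, hv⟩ := h
  exact ⟨f ⟨0, by decide⟩, f ⟨1, by decide⟩, f ⟨2, by decide⟩, hf (by decide), hf (by decide),
    (hv _ _).1 (by decide), (hv _ _).1 (by decide)⟩

theorem contains_p231_of_lt {a b c : Fin π.1} (hab : a < b) (hbc : b < c)
    (hca : π.2 c < π.2 a) (hab' : π.2 a < π.2 b) : Contains π p231 := by
  refine ⟨![a, b, c], Fin.strictMono_iff_lt_succ.2 fun i => ?_, fun i j => ?_⟩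
  · fin_cases i <;> assumption
  · fin_cases i <;> fin_cases j <;> simp +decide [p231, mkP] <;> order

theorem contains_of_forall_lt_imp_lt {f : Fin β.1 → Fin π.1} (hf : StrictMono f)
    (hfv : ∀ i j, β.2 i < β.2 j → π.2 (f i) < π.2 (f j)) : Contains π β := by
  have hmono : StrictMono (π.2 ∘ f ∘ β.2.symm) := fun a b hab => by
    simpa using hfv (β.2.symm a) (β.2.symm b) (by simpa using hab)
  exact ⟨f, hf, fun i j => by simpa using (hmono.lt_iff_lt (a := β.2 i) (b := β.2 j)).symm⟩

theorem exists_patternOf (π : PPerm) (S : Finset (Fin π.1)) : ∃ σ, PatternOf π S σ := by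
  let f := S.orderEmbOfFin rfl
  let s := Tuple.sort (π.2 ∘ f)
  have hs : StrictMono ((π.2 ∘ f) ∘ s) := (Tuple.monotone_sort _).strictMono_of_injective
    (π.2.injective.comp (f.injective.comp s.injective))
  refine ⟨⟨S.card, s⁻¹⟩, f, f.strictMono, by simp [f], fun i j => ?_⟩
  conv_rhs => rw [← s.apply_symm_apply i, ← s.apply_symm_apply j]
  exact hs.lt_iff_lt.symm

end

namespace PPerm

variable {π β σ : PPerm} {S T B : Finset (Fin π.1)} {k l m : ℕ}

def No231 (π : PPerm) : Prop :=
  ∀ a b c : Fin π.1, a < b → b < c → ¬ (π.2 c < π.2 a ∧ π.2 a < π.2 b)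

theorem no231_of_mem_av (h : π ∈ Av p231) : π.No231 :=
  fun _ _ _ hab hbc hv => h (contains_p231_of_lt hab hbc hv.1 hv.2)

def LayeredOn (π : PPerm) (S : Finset (Fin π.1)) : Prop :=
  ∀ a ∈ S, ∀ b ∈ S, ∀ c ∈ S, a < b → b < c →
    ¬ (π.2 c < π.2 a ∧ π.2 a < π.2 b) ∧ ¬ (π.2 b < π.2 c ∧ π.2 c < π.2 a)

def LiesSouthWest (π : PPerm) (S T : Finset (Fin π.1)) : Prop :=
  ∀ a ∈ S, ∀ b ∈ T, a < b ∧ π.2 a < π.2 b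

theorem LiesSouthWest.mono {S' T' : Finset (Fin π.1)} (h : π.LiesSouthWest S T) (hS : S' ⊆ S)
    (hT : T' ⊆ T) : π.LiesSouthWest S' T' :=
  fun a ha b hb => h a (hS ha) b (hT hb)

theorem LiesSouthWest.union_left {S' : Finset (Fin π.1)} (h : π.LiesSouthWest S T)
    (h' : π.LiesSouthWest S' T) : π.LiesSouthWest (S ∪ S') T := by
  intro a ha b hb
  rcases Finset.mem_union.1 ha with ha | ha
  exacts [h a ha b hb, h' a ha b hb]

theorem LayeredOn.union (hS : π.LayeredOn S) (hT : π.LayeredOn T) (h : π.LiesSouthWest S T) :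
    π.LayeredOn (S ∪ T) := by
  intro a ha b hb c hc hab hbc
  simp only [Finset.mem_union] at ha hb hc
  rcases ha with ha | ha <;> rcases hb with hb | hb <;> rcases hc with hc | hc
  -- a triple meeting both `S` and `T` has its first point lowest or its last point highest
  all_goals first
    | exact hS a ha b hb c hc hab hbc
    | exact hT a ha b hb c hc hab hbc
    | grind [LiesSouthWest]

theorem LayeredOn.subset (hS : π.LayeredOn S) (hTS : T ⊆ S) : π.LayeredOn T :=
  fun a ha b hb c hc => hS a (hTS ha) b (hTS hb) c (hTS hc)

theorem layeredOn_of_strictMonoOn (h : StrictMonoOn π.2 S) : π.LayeredOn S := by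
  intro a ha b hb c hc hab hbc
  have := h ha hc (hab.trans hbc)
  constructor <;> order

theorem layeredOn_of_strictAntiOn (h : StrictAntiOn π.2 S) : π.LayeredOn S := by
  intro a ha b hb c hc hab hbc
  have := h ha hb hab
  have := h hb hc hbc
  constructor <;> order

theorem LayeredOn.comap {T : Finset (Fin σ.1)} {f : Fin σ.1 → Fin π.1} (hf : StrictMono f)
    (hfv : ∀ i j, σ.2 i < σ.2 j ↔ π.2 (f i) < π.2 (f j)) (hS : π.LayeredOn S)
    (hTS : ∀ t ∈ T, f t ∈ S) : σ.LayeredOn T := by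
  intro a ha b hb c hc hab hbc
  simp only [hfv]
  exact hS _ (hTS a ha) _ (hTS b hb) _ (hTS c hc) (hf hab) (hf hbc)

theorem mem_layered_of_layeredOn_univ (h : π.LayeredOn Finset.univ) : π ∈ Layered := by
  constructor <;> intro hπ
  · obtain ⟨a, b, c, hab, hbc, hv⟩ := hπ.exists_231
    exact (h a (by simp) b (by simp) c (by simp) hab hbc).1 hv
  · obtain ⟨a, b, c, hab, hbc, hv⟩ := hπ.exists_312
    exact (h a (by simp) b (by simp) c (by simp) hab hbc).2 hv

theorem _root_.PatternOf.mem_layered (h : PatternOf π S σ) (hS : π.LayeredOn S) : σ ∈ Layered := by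
  obtain ⟨f, hf, hrange, hfv⟩ := h
  exact mem_layered_of_layeredOn_univ <| hS.comap hf hfv fun t _ => by
    rw [← Finset.mem_coe, ← hrange]
    exact Set.mem_range_self t

def LayeredColorable (π : PPerm) (k : ℕ) (S : Finset (Fin π.1)) : Prop :=
  ∃ c : Fin π.1 → ℕ, (∀ x ∈ S, c x < k) ∧ ∀ i, π.LayeredOn (S.filter (c · = i))

theorem LayeredOn.layeredColorable (h : π.LayeredOn S) : π.LayeredColorable 1 S :=
  ⟨fun _ => 0, fun _ _ => Nat.one_pos, fun _ => h.subset (Finset.filter_subset _ _)⟩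

theorem LayeredColorable.subset (h : π.LayeredColorable k S) (hTS : T ⊆ S) :
    π.LayeredColorable k T := by
  obtain ⟨c, hck, hc⟩ := h
  exact ⟨c, fun x hx => hck x (hTS hx), fun i => (hc i).subset (Finset.filter_subset_filter _ hTS)⟩

theorem LayeredColorable.mono (h : π.LayeredColorable k S) (hkl : k ≤ l) :
    π.LayeredColorable l S := by
  obtain ⟨c, hck, hc⟩ := h
  exact ⟨c, fun x hx => (hck x hx).trans_le hkl, hc⟩

theorem LayeredColorable.union_of_liesSouthWest (hS : π.LayeredColorable k S)
    (hT : π.LayeredColorable k T) (h : π.LiesSouthWest S T) : π.LayeredColorable k (S ∪ T) := by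
  obtain ⟨cS, hcSk, hcS⟩ := hS
  obtain ⟨cT, hcTk, hcT⟩ := hT
  refine ⟨fun x => if x ∈ S then cS x else cT x, fun x hx => ?_, fun i => ?_⟩
  · by_cases hxS : x ∈ S
    · simpa [hxS] using hcSk x hxS
    · simpa [hxS] using hcTk x ((Finset.mem_union.1 hx).resolve_left hxS)
  · refine ((hcS i).union (hcT i) (h.mono (Finset.filter_subset _ _)
      (Finset.filter_subset _ _))).subset fun x hx => ?_
    simp only [Finset.mem_filter, Finset.mem_union] at hx ⊢
    split_ifs at hx with hxS <;> tauto

theorem LayeredColorable.union (hS : π.LayeredColorable k S) (hT : π.LayeredColorable l T) :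
    π.LayeredColorable (k + l) (S ∪ T) := by
  obtain ⟨cS, hcSk, hcS⟩ := hS
  obtain ⟨cT, hcTk, hcT⟩ := hT
  refine ⟨fun x => if x ∈ S then cS x else k + cT x, fun x hx => ?_, fun i => ?_⟩
  · by_cases hxS : x ∈ S
    · simpa [hxS] using (hcSk x hxS).trans_le (Nat.le_add_right k l)
    · simpa [hxS] using hcTk x ((Finset.mem_union.1 hx).resolve_left hxS)
  · by_cases hik : i < k
    · refine (hcS i).subset fun x hx => ?_
      simp only [Finset.mem_filter, Finset.mem_union] at hx ⊢
      split_ifs at hx with hxS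
      · exact ⟨hxS, hx.2⟩
      · omega
    · refine (hcT (i - k)).subset fun x hx => ?_
      simp only [Finset.mem_filter, Finset.mem_union] at hx ⊢
      split_ifs at hx with hxS
      · exact absurd (hcSk x hxS) (by omega)
      · exact ⟨hx.1.resolve_left hxS, by omega⟩

theorem LayeredColorable.biUnion {ι : Type*} [LinearOrder ι] {M : Finset ι}
    {F : ι → Finset (Fin π.1)} (hF : ∀ y ∈ M, π.LayeredColorable k (F y))
    (hFM : ∀ y ∈ M, ∀ z ∈ M, y < z → π.LiesSouthWest (F y) (F z)) :
    π.LayeredColorable k (M.biUnion F) := by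
  induction M using Finset.induction_on_max with
  | empty => exact ⟨fun _ => 0, by simp, fun _ => by simp [LayeredOn]⟩
  | insert z M hzM ih =>
    have hM : π.LayeredColorable k (M.biUnion F) :=
      ih (fun y hy => hF y (Finset.mem_insert_of_mem hy)) fun y hy w hw =>
        hFM y (Finset.mem_insert_of_mem hy) w (Finset.mem_insert_of_mem hw)
    rw [Finset.biUnion_insert, Finset.union_comm]
    refine hM.union_of_liesSouthWest (hF z (Finset.mem_insert_self z M)) fun a ha b hb => ?_
    obtain ⟨y, hy, hay⟩ := Finset.mem_biUnion.1 ha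
    exact hFM y (Finset.mem_insert_of_mem hy) z (Finset.mem_insert_self z M) (hzM y hy) a hay b hb

def southWest (π : PPerm) (S : Finset (Fin π.1)) (v : Fin π.1) : Finset (Fin π.1) :=
  S.filter fun x => x < v ∧ π.2 x < π.2 v

def southEast (π : PPerm) (S : Finset (Fin π.1)) (v : Fin π.1) : Finset (Fin π.1) :=
  S.filter fun x => v < x ∧ π.2 x < π.2 v

def northEast (π : PPerm) (S : Finset (Fin π.1)) (v : Fin π.1) : Finset (Fin π.1) :=
  S.filter fun x => v < x ∧ π.2 v < π.2 x

def HasTree (π : PPerm) : ℕ → Finset (Fin π.1) → Prop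
  | 0, _ => True
  | m + 1, S => ∃ v ∈ S, π.HasTree m (π.southWest S v) ∧ π.HasTree m (π.southEast S v)

theorem HasTree.mono : ∀ {m : ℕ} {S T : Finset (Fin π.1)}, π.HasTree m S → S ⊆ T → π.HasTree m T
  | 0, _, _, _, _ => trivial
  | _ + 1, _, _, ⟨v, hv, hSW, hSE⟩, hST =>
    ⟨v, hST hv, hSW.mono (Finset.filter_subset_filter _ hST),
      hSE.mono (Finset.filter_subset_filter _ hST)⟩

theorem No231.liesSouthWest_southWest_southEast (hπ : π.No231) (v : Fin π.1) :
    π.LiesSouthWest (π.southWest S v) (π.southEast T v) := by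
  intro a ha b hb
  simp only [southWest, southEast, Finset.mem_filter] at ha hb
  have hab : a < b := ha.2.1.trans hb.2.1
  refine ⟨hab, lt_of_le_of_ne (not_lt.1 fun hba => hπ a v b ha.2.1 hb.2.1 ⟨hba, ha.2.2⟩) ?_⟩
  exact fun h => hab.ne (π.2.injective h)

theorem liesSouthWest_southWest_northEast (v : Fin π.1) :
    π.LiesSouthWest (π.southWest S v) (π.northEast T v) := by
  intro a ha b hb
  simp only [southWest, northEast, Finset.mem_filter] at ha hb
  exact ⟨ha.2.1.trans hb.2.1, ha.2.2.trans hb.2.2⟩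

theorem No231.liesSouthWest_southEast_northEast (hπ : π.No231) (v : Fin π.1) :
    π.LiesSouthWest (π.southEast S v) (π.northEast T v) := by
  intro a ha b hb
  simp only [southEast, northEast, Finset.mem_filter] at ha hb
  refine ⟨lt_of_le_of_ne (not_lt.1 fun hba => hπ v b a hb.2.1 hba ⟨ha.2.2, hb.2.2⟩) ?_,
    ha.2.2.trans hb.2.2⟩
  exact fun h => (ha.2.2.trans hb.2.2).ne (congrArg π.2 h)

def EmbedsOn (β π : PPerm) (T : Finset (Fin β.1)) (S : Finset (Fin π.1))
    (g : Fin β.1 → Fin π.1) : Prop :=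
  (∀ x ∈ T, g x ∈ S) ∧ StrictMonoOn g T ∧ ∀ x ∈ T, ∀ y ∈ T, β.2 x < β.2 y → π.2 (g x) < π.2 (g y)

theorem EmbedsOn.glue (hπ : π.No231) (hβ : β.No231) {T : Finset (Fin β.1)} {v : Fin π.1}
    (hv : v ∈ S) {w : Fin β.1} (hw : ∀ x ∈ T, β.2 x ≤ β.2 w) {gL gR : Fin β.1 → Fin π.1}
    (hL : β.EmbedsOn π (T.filter (· < w)) (π.southWest S v) gL)
    (hR : β.EmbedsOn π (T.filter (w < ·)) (π.southEast S v) gR) :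
    β.EmbedsOn π T S fun x => if x < w then gL x else if w < x then gR x else v := by
  obtain ⟨hLS, hLpos, hLval⟩ := hL
  obtain ⟨hRS, hRpos, hRval⟩ := hR
  simp only [Finset.coe_filter, Finset.mem_filter] at hLpos hLval hRpos hRval
  have hcross := hπ.liesSouthWest_southWest_southEast (S := S) (T := S) v
  simp only [southWest, southEast, Finset.mem_filter] at hLS hRS
  have hwmax : ∀ x ∈ T, x ≠ w → β.2 x < β.2 w := fun x hx hxw =>
    (hw x hx).lt_of_ne fun h => hxw (β.2.injective h)
  set g : Fin β.1 → Fin π.1 := fun x => if x < w then gL x else if w < x then gR x else v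
  have hgL {x} (h : x < w) : g x = gL x := if_pos h
  have hgR {x} (h : w < x) : g x = gR x := by simp [g, h, h.not_gt]
  have hgw : g w = v := by simp [g]
  refine ⟨fun x hx => ?_, fun x hx y hy hxy => ?_, fun x hx y hy hxy => ?_⟩
  · rcases lt_trichotomy x w with hxw | rfl | hxw
    · rw [hgL hxw]; exact (hLS x ⟨hx, hxw⟩).1
    · rwa [hgw]
    · rw [hgR hxw]; exact (hRS x ⟨hx, hxw⟩).1
  · rcases lt_trichotomy x w with hxw | hxw | hxw <;>
      rcases lt_trichotomy y w with hyw | hyw | hyw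
    · rw [hgL hxw, hgL hyw]; exact hLpos ⟨hx, hxw⟩ ⟨hy, hyw⟩ hxy
    · rw [hgL hxw, hyw, hgw]; exact (hLS x ⟨hx, hxw⟩).2.1
    · rw [hgL hxw, hgR hyw]; exact (hLS x ⟨hx, hxw⟩).2.1.trans (hRS y ⟨hy, hyw⟩).2.1
    all_goals try order
    · rw [hxw, hgw, hgR hyw]; exact (hRS y ⟨hy, hyw⟩).2.1
    · rw [hgR hxw, hgR hyw]; exact hRpos ⟨hx, hxw⟩ ⟨hy, hyw⟩ hxy
  · rcases lt_trichotomy x w with hxw | hxw | hxw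
    · rcases lt_trichotomy y w with hyw | hyw | hyw
      · rw [hgL hxw, hgL hyw]; exact hLval x ⟨hx, hxw⟩ y ⟨hy, hyw⟩ hxy
      · rw [hgL hxw, hyw, hgw]; exact (hLS x ⟨hx, hxw⟩).2.2
      · rw [hgL hxw, hgR hyw]
        exact (hcross _ (by simpa [southWest] using hLS x ⟨hx, hxw⟩) _
          (by simpa [southEast] using hRS y ⟨hy, hyw⟩)).2
    · rw [hxw] at hxy
      exact absurd (hw y hy) (not_le.2 hxy)
    · rcases lt_trichotomy y w with hyw | hyw | hyw
      · exact absurd ⟨hxy, hwmax y hy hyw.ne⟩ (hβ y w x hyw hxw)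
      · rw [hgR hxw, hyw, hgw]; exact (hRS x ⟨hx, hxw⟩).2.2
      · rw [hgR hxw, hgR hyw]; exact hRval x ⟨hx, hxw⟩ y ⟨hy, hyw⟩ hxy

theorem embedsOn_empty (g : Fin β.1 → Fin π.1) : β.EmbedsOn π ∅ S g :=
  ⟨by simp, by simpa using Set.subsingleton_empty.strictMonoOn g, by simp⟩

theorem HasTree.exists_embedsOn [Nonempty (Fin π.1)] (hπ : π.No231) (hβ : β.No231) :
    ∀ {m : ℕ} {S : Finset (Fin π.1)} {T : Finset (Fin β.1)}, π.HasTree m S → T.card ≤ m →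
      ∃ g, β.EmbedsOn π T S g
  | 0, _, _, _, hT => by
    rw [Finset.card_eq_zero.1 (Nat.le_zero.1 hT)]
    exact ⟨_, embedsOn_empty fun _ => Classical.arbitrary _⟩
  | m + 1, S, T, ⟨v, hv, hSW, hSE⟩, hT => by
    rcases T.eq_empty_or_nonempty with rfl | hTne
    · exact ⟨_, embedsOn_empty fun _ => v⟩
    obtain ⟨w, hwT, hw⟩ := T.exists_max_image β.2 hTne
    have hcard (p : Fin β.1 → Prop) [DecidablePred p] (hpw : ¬ p w) : (T.filter p).card ≤ m :=
      Nat.le_of_lt_succ <|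
        (Finset.card_lt_card <| Finset.filter_ssubset.2 ⟨w, hwT, hpw⟩).trans_le hT
    obtain ⟨gL, hgL⟩ := exists_embedsOn hπ hβ hSW (hcard (· < w) (lt_irrefl w))
    obtain ⟨gR, hgR⟩ := exists_embedsOn hπ hβ hSE (hcard (w < ·) (lt_irrefl w))
    exact ⟨_, EmbedsOn.glue hπ hβ hv hw hgL hgR⟩

theorem contains_of_hasTree (hπ : π.No231) (hβ : β.No231) (h : π.HasTree β.1 Finset.univ) :
    Contains π β := by
  rcases Nat.eq_zero_or_pos β.1 with hβ0 | hβ0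
  · exact ⟨fun i => (Fin.cast hβ0 i).elim0, fun i => (Fin.cast hβ0 i).elim0,
      fun i => (Fin.cast hβ0 i).elim0⟩
  have : Nonempty (Fin π.1) := by
    obtain ⟨k, hk⟩ := Nat.exists_eq_succ_of_ne_zero hβ0.ne'
    rw [hk] at h
    obtain ⟨v, -⟩ := h
    exact ⟨v⟩
  obtain ⟨g, -, hg, hgv⟩ := h.exists_embedsOn hπ hβ (T := Finset.univ) (by simp)
  exact contains_of_forall_lt_imp_lt (fun i j hij => hg (by simp) (by simp) hij)
    fun i j => hgv i (by simp) j (by simp)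

def leftToRightMaxima (π : PPerm) (S : Finset (Fin π.1)) : Finset (Fin π.1) :=
  S.filter fun y => ∀ x ∈ S, x < y → π.2 x < π.2 y

theorem exists_mem_leftToRightMaxima {x : Fin π.1} (hx : x ∈ B) :
    ∃ y ∈ π.leftToRightMaxima B, y = x ∨ x ∈ π.southEast B y := by
  obtain ⟨y, hy, hymax⟩ := (B.filter (· ≤ x)).exists_max_image π.2 ⟨x, by simp [hx]⟩
  rw [Finset.mem_filter] at hy
  have hlt {w} (hw : w ∈ B) (hwx : w ≤ x) (hwy : w ≠ y) : π.2 w < π.2 y :=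
    (hymax w (by simp [hw, hwx])).lt_of_ne fun h => hwy (π.2.injective h)
  refine ⟨y, Finset.mem_filter.2 ⟨hy.1, fun w hw hwy => hlt hw (hwy.le.trans hy.2) hwy.ne⟩, ?_⟩
  rcases hy.2.lt_or_eq with hyx | hyx
  · exact Or.inr (Finset.mem_filter.2 ⟨hx, hyx, hlt hx le_rfl hyx.ne'⟩)
  · exact Or.inl hyx

theorem No231.liesSouthWest_southEast_leftToRightMaxima (hπ : π.No231) {y z : Fin π.1}
    (hy : y ∈ π.leftToRightMaxima B) (hz : z ∈ π.leftToRightMaxima B) (hyz : y < z) :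
    π.LiesSouthWest (π.southEast B y) (π.southEast B z) := by
  simp only [leftToRightMaxima, Finset.mem_filter] at hy hz
  have hyz' := hz.2 y hy.1 hyz
  intro a ha b hb
  simp only [southEast, Finset.mem_filter] at ha hb
  have haz : a < z := lt_of_le_of_ne (not_lt.1 fun hza => hπ y z a hyz hza ⟨ha.2.2, hyz'⟩)
    fun h => (ha.2.2.trans hyz').ne (congrArg π.2 h)
  refine ⟨haz.trans hb.2.1, lt_of_le_of_ne (not_lt.1 fun hba => hπ a z b haz hb.2.1
    ⟨hba, ha.2.2.trans hyz'⟩) fun h => (haz.trans hb.2.1).ne (π.2.injective h)⟩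

theorem layeredColorable_of_forall_not_hasTree_southEast (hπ : π.No231)
    (hmain : ∀ S, ¬ π.HasTree m S → π.LayeredColorable k S)
    (hB : ∀ y ∈ B, ¬ π.HasTree m (π.southEast B y)) : π.LayeredColorable (k + 1) B := by
  set M := π.leftToRightMaxima B
  have hMB : M ⊆ B := Finset.filter_subset _ _
  have hcover : B ⊆ M.biUnion (π.southEast B) ∪ M := fun x hx => by
    obtain ⟨y, hy, rfl | hxy⟩ := exists_mem_leftToRightMaxima hx
    · exact Finset.mem_union_right _ hy
    · exact Finset.mem_union_left _ (Finset.mem_biUnion.2 ⟨y, hy, hxy⟩)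
  have hM : StrictMonoOn π.2 M := fun a ha b hb hab => (Finset.mem_filter.1 hb).2 a (hMB ha) hab
  refine (LayeredColorable.union ?_ (layeredOn_of_strictMonoOn hM).layeredColorable).subset hcover
  exact LayeredColorable.biUnion (fun y hy => hmain _ (hB y (hMB hy)))
    fun y hy z hz => hπ.liesSouthWest_southEast_leftToRightMaxima hy hz

theorem filter_lt_subset_southWest {v₀ : Fin π.1} (hv₀ : π.HasTree m (π.southEast S v₀))
    (hmax : ∀ v ∈ S, π.2 v₀ < π.2 v → ¬ π.HasTree m (π.southEast S v)) :
    S.filter (· < v₀) ⊆ π.southWest S v₀ := by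
  intro x hx
  rw [Finset.mem_filter] at hx
  refine Finset.mem_filter.2 ⟨hx.1, hx.2, lt_of_not_ge fun h => hmax x hx.1
    (h.lt_of_ne fun h' => hx.2.ne (π.2.injective h').symm) (hv₀.mono fun z hz => ?_)⟩
  simp only [southEast, Finset.mem_filter] at hz ⊢
  exact ⟨hz.1, hx.2.trans hz.2.1, hz.2.2.trans_le h⟩

theorem forall_not_hasTree_southEast_northEast {v₀ : Fin π.1}
    (hmax : ∀ v ∈ S, π.2 v₀ < π.2 v → ¬ π.HasTree m (π.southEast S v)) :
    ∀ y ∈ π.northEast S v₀, ¬ π.HasTree m (π.southEast (π.northEast S v₀) y) := fun y hy h => by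
  simp only [northEast, Finset.mem_filter] at hy
  exact hmax y hy.1 hy.2.2 (h.mono (Finset.filter_subset_filter _ (Finset.filter_subset _ _)))

theorem sdiff_insert_subset (v : Fin π.1) (W : Finset (Fin π.1)) :
    S \ insert v W ⊆ S.filter (· < v) ∪ π.southEast S v \ W ∪ π.northEast S v := by
  intro x hx
  simp only [Finset.mem_sdiff, Finset.mem_insert, not_or] at hx
  simp only [southEast, northEast, Finset.mem_union, Finset.mem_sdiff, Finset.mem_filter]
  rcases lt_trichotomy x v with hxv | hxv | hxv
  · exact Or.inl (Or.inl ⟨hx.1, hxv⟩)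
  · exact absurd hxv hx.2.1
  · rcases lt_or_gt_of_ne fun h => hx.2.1 (π.2.injective h) with hxv' | hxv'
    · exact Or.inl (Or.inr ⟨⟨hx.1, hxv, hxv'⟩, hx.2.2⟩)
    · exact Or.inr ⟨hx.1, hxv, hxv'⟩

theorem exists_strictAntiOn_layeredColorable_sdiff (hπ : π.No231)
    (hmain : ∀ S, ¬ π.HasTree m S → π.LayeredColorable k S) (S : Finset (Fin π.1))
    (hS : ¬ π.HasTree (m + 1) S) :
    ∃ W ⊆ S, StrictAntiOn π.2 W ∧ π.LayeredColorable (k + 1) (S \ W) := by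
  classical
  induction S using Finset.strongInduction with
  | H S ih =>
  by_cases hV : ∃ v ∈ S, π.HasTree m (π.southEast S v)
  swap
  · refine ⟨∅, Finset.empty_subset _, by simpa using Set.subsingleton_empty.strictAntiOn π.2, ?_⟩
    simpa using
      layeredColorable_of_forall_not_hasTree_southEast hπ hmain fun v hv h => hV ⟨v, hv, h⟩
  obtain ⟨v₀, hv₀, hv₀max⟩ := (S.filter fun v => π.HasTree m (π.southEast S v)).exists_max_image
    π.2 (by simpa [Finset.Nonempty] using hV)
  rw [Finset.mem_filter] at hv₀
  have hmax : ∀ v ∈ S, π.2 v₀ < π.2 v → ¬ π.HasTree m (π.southEast S v) :=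
    fun v hv hlt h => (hv₀max v (Finset.mem_filter.2 ⟨hv, h⟩)).not_gt hlt
  set A := S.filter (· < v₀)
  set G := π.southEast S v₀
  set B := π.northEast S v₀
  have hAW := filter_lt_subset_southWest hv₀.2 hmax
  have hA : π.LayeredColorable (k + 1) A :=
    (hmain A fun h => hS ⟨v₀, hv₀.1, h.mono hAW, hv₀.2⟩).mono k.le_succ
  have hGS : G ⊂ S := Finset.filter_ssubset.2 ⟨v₀, hv₀.1, by simp⟩
  obtain ⟨WG, hWG, hWGanti, hG⟩ := ih G hGS fun h => hS (h.mono hGS.subset)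
  have hB : π.LayeredColorable (k + 1) B :=
    layeredColorable_of_forall_not_hasTree_southEast hπ hmain
      (forall_not_hasTree_southEast_northEast hmax)
  have hWGG : ∀ x ∈ WG, v₀ < x ∧ π.2 x < π.2 v₀ := fun x hx => (Finset.mem_filter.1 (hWG hx)).2
  refine ⟨insert v₀ WG, Finset.insert_subset hv₀.1 (hWG.trans hGS.subset), ?_, ?_⟩
  · rw [Finset.coe_insert, strictAntiOn_insert_iff]
    exact ⟨fun b hb hbv => absurd (hWGG b hb).1 hbv.not_gt, fun b hb _ => (hWGG b hb).2, hWGanti⟩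
  have hAG : π.LiesSouthWest A (G \ WG) :=
    (hπ.liesSouthWest_southWest_southEast v₀).mono hAW Finset.sdiff_subset
  have hAGB : π.LiesSouthWest (A ∪ G \ WG) B :=
    ((liesSouthWest_southWest_northEast v₀).mono hAW subset_rfl).union_left
      ((hπ.liesSouthWest_southEast_northEast v₀).mono Finset.sdiff_subset subset_rfl)
  exact ((hA.union_of_liesSouthWest hG hAG).union_of_liesSouthWest hB hAGB).subset
    (sdiff_insert_subset v₀ WG)

theorem layeredColorable_of_not_hasTree (hπ : π.No231) :
    ∀ (m : ℕ) (S : Finset (Fin π.1)), ¬ π.HasTree m S → π.LayeredColorable (2 * m) S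
  | 0, _, hS => absurd trivial hS
  | m + 1, S, hS => by
    obtain ⟨W, -, hW, hSW⟩ := exists_strictAntiOn_layeredColorable_sdiff hπ
      (layeredColorable_of_not_hasTree hπ m) S hS
    exact (hSW.union (layeredOn_of_strictAntiOn hW).layeredColorable).subset
      (by simp [Finset.sdiff_union_self_eq_union])

theorem mem_mergeAll_replicate_layered :
    ∀ (k : ℕ) (π : PPerm), π.LayeredColorable (k + 1) Finset.univ →
      π ∈ MergeAll (List.replicate (k + 1) Layered)
  | 0, π, ⟨c, hck, hc⟩ => by
    refine mem_layered_of_layeredOn_univ ((hc 0).subset fun x _ => ?_)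
    simpa using hck x (Finset.mem_univ x)
  | k + 1, π, ⟨c, hck, hc⟩ => by
    obtain ⟨σ, hσ⟩ := exists_patternOf π (Finset.univ.filter (c · = 0))
    obtain ⟨τ, g, hg, hgrange, hgv⟩ := exists_patternOf π (Finset.univ.filter (c · = 0))ᶜ
    have hg0 (t : Fin τ.1) : c (g t) ≠ 0 := by
      have := Set.mem_range_self (f := g) t
      rw [hgrange] at this
      simpa using this
    have hτ : τ.LayeredColorable (k + 1) Finset.univ := by
      refine ⟨fun t => c (g t) - 1, fun t _ => ?_,
        fun i => (hc (i + 1)).comap hg hgv fun t ht => ?_⟩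
      · have := hck (g t) (Finset.mem_univ _)
        dsimp only
        omega
      · simp only [Finset.mem_filter, Finset.mem_univ, true_and] at ht ⊢
        have := hg0 t
        omega
    refine ⟨σ, hσ.mem_layered (hc 0), τ, mem_mergeAll_replicate_layered k τ hτ, _, hσ, ?_⟩
    rw [← Finset.coe_compl]
    exact ⟨g, hg, hgrange, hgv⟩

end PPerm

/-- Every proper subclass of `Av(231)` is `L`-splittable: it is contained in the
merge of finitely many subclasses of the layered permutations. -/
theorem stmt13 (C : Set PPerm) (hC : IsPermClass C)
    (hsub : C ⊆ Av p231) (hne : C ≠ Av p231) :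
    ∃ Cs : List (Set PPerm), Cs ≠ [] ∧
      (∀ D ∈ Cs, IsPermClass D ∧ D ⊆ Layered) ∧ C ⊆ MergeAll Cs := by
  obtain ⟨β, hβ, hβC⟩ := Set.exists_of_ssubset (hsub.ssubset_of_ne hne)
  refine ⟨List.replicate (2 * β.1 + 1) Layered, by simp, fun D hD => ?_, fun π hπ => ?_⟩
  · rw [List.eq_of_mem_replicate hD]
    exact ⟨isPermClass_layered, subset_rfl⟩
  have hπ231 := PPerm.no231_of_mem_av (hsub hπ)
  have hπβ : ¬ π.HasTree β.1 Finset.univ := fun h =>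
    hβC (hC π hπ β (PPerm.contains_of_hasTree hπ231 (PPerm.no231_of_mem_av hβ) h))
  exact PPerm.mem_mergeAll_replicate_layered _ π
    ((PPerm.layeredColorable_of_not_hasTree hπ231 _ _ hπβ).mono (Nat.le_succ _))
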